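/- The softmax function σ : ℝ^c → ℝ^c, σ(a)_k = exp(a_k)/Σ_l exp(a_l), is Lipschitz continuous with respect to the Euclidean norm with Lipschitz constant at most 1. -/

import Mathlib

/-! The Jacobian of softmax at `a` is `diag p - p pᵀ` with `p = σ(a)` a probability vector, and
`‖(diag p - p pᵀ) v‖² = ∑ₖ (pₖ (vₖ - ⟪p, v⟫))² ≤ ∑ₖ pₖ (vₖ - ⟪p, v⟫)² ≤ ∑ₖ pₖ vₖ² ≤ ‖v‖²`,
using `pₖ² ≤ pₖ` and that a weighted variance is at most the weighted second moment.
The mean value inequality turns this Jacobian bound into the Lipschitz bound. -/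

noncomputable def softmax {c : ℕ} (a : EuclideanSpace ℝ (Fin c)) :
    EuclideanSpace ℝ (Fin c) :=
  WithLp.toLp 2 (fun k => Real.exp (a k) / ∑ l : Fin c, Real.exp (a l))

variable {ι : Type*} [Fintype ι]

theorem sum_sq_mul_sub_dotProduct_le {w : ι → ℝ} (hw0 : ∀ k, 0 ≤ w k) (hw1 : ∑ k, w k ≤ 1)
    (v : ι → ℝ) : ∑ k, (w k * (v k - w ⬝ᵥ v)) ^ 2 ≤ ∑ k, v k ^ 2 := by
  set m := w ⬝ᵥ v
  have hw_le_one (k : ι) : w k ≤ 1 :=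
    (Finset.single_le_sum (fun l _ => hw0 l) (Finset.mem_univ k)).trans hw1
  have hcentered :
      ∑ k, w k * (v k - m) ^ 2 = ∑ k, w k * v k ^ 2 - (2 - ∑ k, w k) * m ^ 2 := by
    have hexpand (k : ι) :
        w k * (v k - m) ^ 2 = w k * v k ^ 2 - 2 * m * (w k * v k) + m ^ 2 * w k := by
      ring
    simp only [hexpand, Finset.sum_add_distrib, Finset.sum_sub_distrib, ← Finset.mul_sum]
    change _ - 2 * m * m + _ = _
    ring
  calc ∑ k, (w k * (v k - m)) ^ 2 ≤ ∑ k, w k * (v k - m) ^ 2 := by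
        gcongr with k
        rw [mul_pow]
        gcongr
        nlinarith [hw0 k, hw_le_one k]
    _ ≤ ∑ k, w k * v k ^ 2 := by
        rw [hcentered]
        nlinarith [sq_nonneg m]
    _ ≤ ∑ k, v k ^ 2 := by
        gcongr with k
        nlinarith [hw0 k, hw_le_one k, sq_nonneg (v k)]

namespace Matrix

theorem mulVec_diagonal_sub_vecMulVec {α : Type*} [CommRing α] [DecidableEq ι] (w v : ι → α) :
    (diagonal w - vecMulVec w w) *ᵥ v = fun k => w k * (v k - w ⬝ᵥ v) := by
  ext k
  simp [sub_mulVec, mulVec_diagonal, vecMulVec_mulVec, mul_sub, mul_comm]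

theorem norm_toEuclideanCLM_diagonal_sub_vecMulVec_le_one [DecidableEq ι] {w : ι → ℝ}
    (hw0 : ∀ k, 0 ≤ w k) (hw1 : ∑ k, w k ≤ 1) :
    ‖toEuclideanCLM (𝕜 := ℝ) (diagonal w - vecMulVec w w)‖ ≤ 1 := by
  refine ContinuousLinearMap.opNorm_le_bound _ zero_le_one fun v => ?_
  rw [one_mul, EuclideanSpace.norm_eq, EuclideanSpace.norm_eq]
  refine Real.sqrt_le_sqrt ?_
  simp only [ofLp_toEuclideanCLM, mulVec_diagonal_sub_vecMulVec, Real.norm_eq_abs, sq_abs]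
  exact sum_sq_mul_sub_dotProduct_le hw0 hw1 v.ofLp

end Matrix

open Real

variable {c : ℕ}

theorem softmax_nonneg (a : EuclideanSpace ℝ (Fin c)) (k : Fin c) : 0 ≤ softmax a k := by
  unfold softmax; positivity

theorem sum_softmax_le_one (a : EuclideanSpace ℝ (Fin c)) : ∑ k, softmax a k ≤ 1 := by
  simp only [softmax, ← Finset.sum_div]
  exact div_self_le_one _

theorem hasFDerivAt_softmax (a : EuclideanSpace ℝ (Fin c)) :
    HasFDerivAt softmax (Matrix.toEuclideanCLM (𝕜 := ℝ) (Matrix.diagonal (softmax a).ofLp -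
      Matrix.vecMulVec (softmax a).ofLp (softmax a).ofLp)) a := by
  rw [← hasFDerivWithinAt_univ, hasFDerivWithinAt_piLp]
  intro k
  have : Nonempty (Fin c) := ⟨k⟩
  have hS : 0 < ∑ l, exp (a l) := Finset.sum_pos (fun _ _ => exp_pos _) Finset.univ_nonempty
  have hexp (l : Fin c) : HasFDerivAt (fun y : EuclideanSpace ℝ (Fin c) => exp (y l))
      (exp (a l) • PiLp.proj 2 (fun _ => ℝ) l) a :=
    (PiLp.hasFDerivAt_apply 2 a l).exp
  have hinv := (hasDerivAt_inv hS.ne').comp_hasFDerivAt a (HasFDerivAt.fun_sum fun l _ => hexp l)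
  refine ((hexp k).mul hinv).hasFDerivWithinAt.congr_fderiv ?_
  ext v
  simp only [ContinuousLinearMap.comp_apply, add_apply, smul_apply, sum_apply, Function.comp_apply,
    PiLp.proj_apply, smul_eq_mul, Matrix.ofLp_toEuclideanCLM, Matrix.mulVec_diagonal_sub_vecMulVec,
    softmax, WithLp.ofLp_toLp, dotProduct, div_mul_eq_mul_div, ← Finset.sum_div]
  field_simp
  ring

theorem softmax_lipschitzWith_one : LipschitzWith 1 (softmax (c := c)) :=
  lipschitzWith_of_nnnorm_fderiv_le (fun a => (hasFDerivAt_softmax a).differentiableAt)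
    fun a => by
      rw [(hasFDerivAt_softmax a).fderiv]
      exact_mod_cast Matrix.norm_toEuclideanCLM_diagonal_sub_vecMulVec_le_one (softmax_nonneg a)
        (sum_softmax_le_one a)

theorem softmax_lipschitz_le_one {c : ℕ} (a b : EuclideanSpace ℝ (Fin c)) :
    ‖softmax a - softmax b‖ ≤ ‖a - b‖ := by
  simpa [dist_eq_norm] using softmax_lipschitzWith_one.dist_le_mul a b
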